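/- Approximation bound C4.3 (variance of the average of marginalized circle means): Given a dependency structure B, suppose |μ_i(z)| ≤ b for all i and z, and |B(i)| ≤ c̃ for all i. Then for each a ∈ {0,1}: 0 ≤ E[((1/N) Σ_{k=1}^N μ_k^{(a)}(Z))²] − ((1/N) Σ_{k=1}^N E[μ_k^{(a)}(Z)])² ≤ c̃ b² / N. -/

import Mathlib

/-- Expectation with respect to the Bernoulli(p) product measure on `{0,1}^N`. -/
noncomputable def bexp {N : ℕ} (p : ℝ) (f : (Fin N → Bool) → ℝ) : ℝ :=
  ∑ z : Fin N → Bool, (∏ i, if z i then p else 1 - p) * f z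

/-- Covariance under the Bernoulli(p) product measure. -/
noncomputable def bcov {N : ℕ} (p : ℝ) (f g : (Fin N → Bool) → ℝ) : ℝ :=
  bexp p (fun z => f z * g z) - bexp p f * bexp p g

/-- A dependency structure. -/
def DepStruct {N : ℕ} (p : ℝ) (μ : Fin N → (Fin N → Bool) → ℝ)
    (B : Fin N → Finset (Fin N)) : Prop :=
  (∀ i, i ∈ B i) ∧
  ∀ i j : Fin N, j ∉ B i →
    (∀ z : Fin N → Bool, μ i (Function.update z j false) = μ i (Function.update z j true)) ∧
    (∀ z : Fin N → Bool, μ j (Function.update z i false) = μ j (Function.update z i true)) ∧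
    (∀ a b : Bool, bcov p (fun z => μ i (Function.update z i a))
        (fun z => μ j (Function.update z j b)) = 0)

/-!
The quantity in question is `Var(X)` for `X = (1/N) Σ_k μ_k^{(a)}(Z)`, hence nonnegative, and
`Var(X) = N⁻² Σ_i Σ_j Cov(μ_i^{(a)}, μ_j^{(a)})`. For `j ∉ B(i)` the covariance vanishes, and every
remaining covariance is at most `b²` (from `2 Cov(f, g) ≤ Var f + Var g` and `Var f ≤ E[f²] ≤ b²`).
Each of the `N` rows thus contributes at most `c̃ b²`, giving `Var(X) ≤ N⁻² · N c̃ b² = c̃ b² / N`.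
-/

open Finset

section Bernoulli

variable {N : ℕ} {p : ℝ}

lemma sum_prod_bernoulli_weight (p : ℝ) :
    ∑ z : Fin N → Bool, ∏ i, (if z i then p else 1 - p) = 1 := by
  rw [← Fintype.piFinset_univ, ← prod_univ_sum (fun _ : Fin N => (univ : Finset Bool))
    (fun _ b => if b then p else 1 - p)]
  simp

lemma prod_bernoulli_weight_nonneg (hp0 : 0 ≤ p) (hp1 : p ≤ 1) (z : Fin N → Bool) :
    0 ≤ ∏ i, if z i then p else 1 - p :=
  prod_nonneg fun i _ => by split <;> linarith

lemma bexp_const (c : ℝ) : bexp (N := N) p (fun _ => c) = c := by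
  rw [bexp, ← sum_mul, sum_prod_bernoulli_weight, one_mul]

lemma bexp_add (f g : (Fin N → Bool) → ℝ) :
    bexp p (fun z => f z + g z) = bexp p f + bexp p g := by
  simp only [bexp, mul_add, sum_add_distrib]

lemma bexp_sub (f g : (Fin N → Bool) → ℝ) :
    bexp p (fun z => f z - g z) = bexp p f - bexp p g := by
  simp only [bexp, mul_sub, sum_sub_distrib]

lemma bexp_const_mul (c : ℝ) (f : (Fin N → Bool) → ℝ) :
    bexp p (fun z => c * f z) = c * bexp p f := by
  simp only [bexp, mul_sum, mul_left_comm]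

lemma bexp_sum {ι : Type*} (s : Finset ι) (f : ι → (Fin N → Bool) → ℝ) :
    bexp p (fun z => ∑ k ∈ s, f k z) = ∑ k ∈ s, bexp p (f k) := by
  simp only [bexp, mul_sum]
  exact sum_comm

lemma bexp_mono (hp0 : 0 ≤ p) (hp1 : p ≤ 1) {f g : (Fin N → Bool) → ℝ}
    (h : ∀ z, f z ≤ g z) : bexp p f ≤ bexp p g :=
  sum_le_sum fun z _ => mul_le_mul_of_nonneg_left (h z) (prod_bernoulli_weight_nonneg hp0 hp1 z)

lemma bcov_eq_bexp_centered (f g : (Fin N → Bool) → ℝ) :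
    bcov p f g = bexp p (fun z => (f z - bexp p f) * (g z - bexp p g)) := by
  have expand : (fun z => (f z - bexp p f) * (g z - bexp p g)) = fun z =>
      f z * g z - bexp p g * f z - bexp p f * g z + bexp p f * bexp p g := by
    funext z; ring
  rw [expand, bcov]
  simp only [bexp_add, bexp_sub, bexp_const_mul, bexp_const]
  ring

lemma bexp_sq_sub_sq_bexp (f : (Fin N → Bool) → ℝ) :
    bexp p (fun z => f z ^ 2) - bexp p f ^ 2 = bcov p f f := by
  simp only [bcov, sq]

lemma bcov_const_mul_self (c : ℝ) (f : (Fin N → Bool) → ℝ) :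
    bcov p (fun z => c * f z) (fun z => c * f z) = c ^ 2 * bcov p f f := by
  have expand : (fun z => c * f z * (c * f z)) = fun z => c ^ 2 * (f z * f z) := by
    funext z; ring
  rw [bcov, bcov, expand, bexp_const_mul, bexp_const_mul]
  ring

lemma bcov_self_nonneg (hp0 : 0 ≤ p) (hp1 : p ≤ 1) (f : (Fin N → Bool) → ℝ) :
    0 ≤ bcov p f f := by
  rw [bcov_eq_bexp_centered, ← bexp_const (N := N) (p := p) 0]
  exact bexp_mono hp0 hp1 fun z => mul_self_nonneg _

lemma bcov_self_le_sq (hp0 : 0 ≤ p) (hp1 : p ≤ 1) {f : (Fin N → Bool) → ℝ} {b : ℝ}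
    (hf : ∀ z, |f z| ≤ b) : bcov p f f ≤ b ^ 2 := by
  have hsq : bexp p (fun z => f z * f z) ≤ b ^ 2 := by
    rw [← bexp_const (N := N) (p := p) (b ^ 2)]
    refine bexp_mono hp0 hp1 fun z => ?_
    rw [← sq, ← sq_abs]
    exact pow_le_pow_left₀ (abs_nonneg _) (hf z) 2
  rw [bcov]
  nlinarith [mul_self_nonneg (bexp p f)]

lemma two_mul_bcov_le (hp0 : 0 ≤ p) (hp1 : p ≤ 1) (f g : (Fin N → Bool) → ℝ) :
    2 * bcov p f g ≤ bcov p f f + bcov p g g := by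
  simp only [bcov_eq_bexp_centered, ← bexp_const_mul, ← bexp_add]
  exact bexp_mono hp0 hp1 fun z => by simpa only [mul_assoc, sq] using two_mul_le_add_sq _ _

lemma bcov_le_sq (hp0 : 0 ≤ p) (hp1 : p ≤ 1) {f g : (Fin N → Bool) → ℝ} {b : ℝ}
    (hf : ∀ z, |f z| ≤ b) (hg : ∀ z, |g z| ≤ b) : bcov p f g ≤ b ^ 2 := by
  linarith [two_mul_bcov_le hp0 hp1 f g, bcov_self_le_sq hp0 hp1 hf, bcov_self_le_sq hp0 hp1 hg]

lemma bcov_sum_sum {ι κ : Type*} (s : Finset ι) (t : Finset κ)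
    (f : ι → (Fin N → Bool) → ℝ) (g : κ → (Fin N → Bool) → ℝ) :
    bcov p (fun z => ∑ i ∈ s, f i z) (fun z => ∑ j ∈ t, g j z)
      = ∑ i ∈ s, ∑ j ∈ t, bcov p (f i) (g j) := by
  simp only [bcov, sum_mul_sum, bexp_sum, sum_sub_distrib]

lemma bcov_sum_self_le_of_sparse {ι : Type*} [Fintype ι] (hp0 : 0 ≤ p) (hp1 : p ≤ 1)
    (F : ι → (Fin N → Bool) → ℝ) (B : ι → Finset ι) {b : ℝ} {c : ℕ}
    (hF : ∀ i z, |F i z| ≤ b) (hc : ∀ i, #(B i) ≤ c)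
    (hB : ∀ i j, j ∉ B i → bcov p (F i) (F j) = 0) :
    bcov p (fun z => ∑ i, F i z) (fun z => ∑ i, F i z) ≤ Fintype.card ι * (c * b ^ 2) := by
  have row_le (i : ι) : ∑ j, bcov p (F i) (F j) ≤ c * b ^ 2 :=
    calc ∑ j, bcov p (F i) (F j) = ∑ j ∈ B i, bcov p (F i) (F j) :=
          (sum_subset (subset_univ _) fun j _ hj => hB i j hj).symm
      _ ≤ ∑ _j ∈ B i, b ^ 2 := sum_le_sum fun j _ => bcov_le_sq hp0 hp1 (hF i) (hF j)
      _ = #(B i) * b ^ 2 := by rw [sum_const, nsmul_eq_mul]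
      _ ≤ c * b ^ 2 := by gcongr; exact_mod_cast hc i
  calc bcov p (fun z => ∑ i, F i z) (fun z => ∑ i, F i z)
      = ∑ i, ∑ j, bcov p (F i) (F j) := bcov_sum_sum _ _ _ _
    _ ≤ ∑ _i : ι, c * b ^ 2 := sum_le_sum fun i _ => row_le i
    _ = Fintype.card ι * (c * b ^ 2) := by rw [sum_const, card_univ, nsmul_eq_mul]

end Bernoulli

theorem approx_bound_C43_general
    (N : ℕ) (p : ℝ) (hp0 : 0 < p) (hp1 : p < 1)
    (μ : Fin N → (Fin N → Bool) → ℝ) (B : Fin N → Finset (Fin N))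
    (hB : DepStruct p μ B)
    (b : ℝ) (hb : ∀ i z, |μ i z| ≤ b)
    (ctil : ℕ) (hc : ∀ i, (B i).card ≤ ctil)
    (a : Bool) :
    0 ≤ bexp p (fun z => ((1 / (N : ℝ)) * ∑ k, μ k (Function.update z k a)) ^ 2)
        - ((1 / (N : ℝ)) * ∑ k, bexp p (fun z => μ k (Function.update z k a))) ^ 2
    ∧ bexp p (fun z => ((1 / (N : ℝ)) * ∑ k, μ k (Function.update z k a)) ^ 2)
        - ((1 / (N : ℝ)) * ∑ k, bexp p (fun z => μ k (Function.update z k a))) ^ 2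
      ≤ ctil * b ^ 2 / N := by
  rw [← bexp_sum, ← bexp_const_mul, bexp_sq_sub_sq_bexp, bcov_const_mul_self]
  have hcov := bcov_sum_self_le_of_sparse hp0.le hp1.le (fun k z => μ k (Function.update z k a))
    B (fun k z => hb k _) hc fun i j hj => (hB.2 i j hj).2.2 a a
  refine ⟨mul_nonneg (sq_nonneg _) (bcov_self_nonneg hp0.le hp1.le _), ?_⟩
  calc (1 / (N : ℝ)) ^ 2 * bcov p _ _ ≤ (1 / (N : ℝ)) ^ 2 * (N * (ctil * b ^ 2)) := by
        rw [Fintype.card_fin] at hcov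
        gcongr
    _ = ctil * b ^ 2 / N := by
        rcases eq_or_ne (N : ℝ) 0 with hN | hN
        · simp [hN]
        · field_simp

/-- Approximation bound C4.3 (variance of the average of marginalized circle means):
given a dependency structure with `|μ_i| ≤ b` and `|B(i)| ≤ c̃`, for each `a ∈ {0,1}`:
`0 ≤ E[((1/N) Σ_k μ_k^{(a)}(Z))²] − ((1/N) Σ_k E[μ_k^{(a)}(Z)])² ≤ c̃ b²/N`. -/
theorem approx_bound_C43
    (N : ℕ) (hN : 1 ≤ N) (p : ℝ) (hp0 : 0 < p) (hp1 : p < 1)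
    (μ : Fin N → (Fin N → Bool) → ℝ) (B : Fin N → Finset (Fin N))
    (hB : DepStruct p μ B)
    (b : ℝ) (hb : ∀ i z, |μ i z| ≤ b)
    (ctil : ℕ) (hc : ∀ i, (B i).card ≤ ctil)
    (a : Bool) :
    0 ≤ bexp p (fun z => ((1 / (N : ℝ)) * ∑ k, μ k (Function.update z k a)) ^ 2)
        - ((1 / (N : ℝ)) * ∑ k, bexp p (fun z => μ k (Function.update z k a))) ^ 2
    ∧ bexp p (fun z => ((1 / (N : ℝ)) * ∑ k, μ k (Function.update z k a)) ^ 2)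
        - ((1 / (N : ℝ)) * ∑ k, bexp p (fun z => μ k (Function.update z k a))) ^ 2
      ≤ ctil * b ^ 2 / N :=
  approx_bound_C43_general N p hp0 hp1 μ B hB b hb ctil hc a
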